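/- Let H and G be groupoids and Γ: H → G a star injective functor. Define a partial map from G × H_0 to H_0 by: g·x is defined iff there exists h ∈ H with d(h)=x and Γ(h)=g, in which case g·x = r(h). This is a well-defined partial action of G on H_0, and it is global if and only if Γ is a covering. -/
import Mathlib


universe u v

/-- A groupoid in the axiomatic sense: a set with a partial multiplication
(`D g h` means the product `gh` is defined, `mul` is a total function whose
value is only meaningful when the product is defined) and a total inversion. -/
class Gpd (G : Type u) where
  mul : G → G → G
  inv : G → G
  D : G → G → Prop
  inv_left : ∀ g, D (inv g) g
  inv_right : ∀ g, D g (inv g)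
  D_iff : ∀ g h, D g h ↔ mul (inv g) g = mul h (inv h)
  assoc : ∀ g h k, D g h → D h k →
    D (mul g h) k ∧ D g (mul h k) ∧ mul (mul g h) k = mul g (mul h k)
  inv_cancel_left : ∀ g h, D g h → mul (inv g) (mul g h) = h
  inv_cancel_right : ∀ g h, D g h → mul (mul g h) (inv h) = g

namespace Gpd

variable {G : Type u} [Gpd G]

/-- The domain `d(g) = g⁻¹g`. -/
def d (g : G) : G := mul (inv g) g

/-- The range `r(g) = gg⁻¹`. -/
def r (g : G) : G := mul g (inv g)

/-- Identities (= idempotents) of the groupoid. -/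
def IsId (e : G) : Prop := D e e ∧ mul e e = e

/-- The set `G₀` of identities of `G`. -/
def objs (G : Type u) [Gpd G] : Set G := {e | IsId e}

/-- Subgroupoid: a nonempty subset closed under inverses and defined products. -/
def IsSubgroupoid (H : Set G) : Prop :=
  H.Nonempty ∧ (∀ h ∈ H, inv h ∈ H) ∧
    ∀ g h : G, g ∈ H → h ∈ H → D g h → mul g h ∈ H

/-- Wide subgroupoid: a subgroupoid containing all identities of `G`. -/
def IsWide (H : Set G) : Prop := IsSubgroupoid H ∧ objs G ⊆ H

/-- Normal subgroupoid: wide and closed under defined conjugations `g⁻¹hg`. -/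
def IsNormal (H : Set G) : Prop :=
  IsWide H ∧ ∀ g h : G, h ∈ H → D (inv g) h → D (mul (inv g) h) g →
    mul (mul (inv g) h) g ∈ H

end Gpd

open Gpd

/-- A partial action of a groupoid `G` on a set `X` (axioms (PGrA1)-(PGrA3)). -/
structure PAction (G : Type u) (X : Type v) [Gpd G] where
  defined : G → X → Prop
  act : G → X → X
  ex_id : ∀ x : X, ∃ e ∈ objs G, defined e x
  id_act : ∀ (e : G) (x : X), e ∈ objs G → defined e x → act e x = x
  inv_act : ∀ (g : G) (x : X), defined g x →
    defined (Gpd.inv g) (act g x) ∧ act (Gpd.inv g) (act g x) = x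
  comp_act : ∀ (g h : G) (x : X), Gpd.D g h → defined h x → defined g (act h x) →
    defined (Gpd.mul g h) x ∧ act (Gpd.mul g h) x = act g (act h x)

namespace GpdAux

variable {G : Type*} [Gpd G]

lemma d_eq_r_of_D {g h : G} (hgh : Gpd.D g h) : d g = r h := (Gpd.D_iff g h).mp hgh

lemma D_of_d_eq_r {g h : G} (e : d g = r h) : Gpd.D g h := (Gpd.D_iff g h).mpr e

lemma mul_d_inv (g : G) : mul (d g) (inv g) = inv g :=
  Gpd.inv_cancel_right (inv g) g (Gpd.inv_left g)

lemma isId_d (g : G) : IsId (d g) := by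
  obtain ⟨h1, -, -⟩ := Gpd.assoc (inv g) g (inv g) (Gpd.inv_left g) (Gpd.inv_right g)
  obtain ⟨-, h2, h3⟩ := Gpd.assoc (d g) (inv g) g h1 (Gpd.inv_left g)
  refine ⟨h2, ?_⟩
  show mul (d g) (mul (inv g) g) = d g
  rw [← h3, mul_d_inv]; rfl

lemma mul_inv_r (g : G) : mul (inv g) (r g) = inv g :=
  Gpd.inv_cancel_left g (inv g) (Gpd.inv_right g)

lemma isId_r (g : G) : IsId (r g) := by
  obtain ⟨-, h1, -⟩ := Gpd.assoc (inv g) g (inv g) (Gpd.inv_left g) (Gpd.inv_right g)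
  obtain ⟨h2, -, h3⟩ := Gpd.assoc g (inv g) (r g) (Gpd.inv_right g) h1
  refine ⟨h2, ?_⟩
  show mul (mul g (inv g)) (r g) = r g
  rw [h3, mul_inv_r]; rfl

lemma d_isId {e : G} (he : IsId e) : d e = e := by
  have := Gpd.inv_cancel_left e e he.1
  rwa [he.2] at this

lemma r_isId {e : G} (he : IsId e) : r e = e := by
  have := Gpd.inv_cancel_right e e he.1
  rwa [he.2] at this

lemma inv_inv (g : G) : inv (inv g) = g := by
  have h1 : mul (inv (inv g)) (inv g) = mul g (inv g) := d_eq_r_of_D (Gpd.inv_left g)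
  have h2 := Gpd.inv_cancel_right (inv (inv g)) (inv g) (Gpd.inv_left (inv g))
  have h3 := Gpd.inv_cancel_right g (inv g) (Gpd.inv_right g)
  rw [h1, h3] at h2
  exact h2.symm

lemma d_inv (g : G) : d (inv g) = r g := by
  show mul (inv (inv g)) (inv g) = r g
  rw [inv_inv]; rfl

lemma r_inv (g : G) : r (inv g) = d g := by
  show mul (inv g) (inv (inv g)) = d g
  rw [inv_inv]; rfl

lemma mul_d (g : G) : mul g (d g) = g := by
  have := mul_inv_r (inv g)
  rwa [inv_inv, r_inv] at this

lemma D_r_self (g : G) : Gpd.D (r g) g :=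
  (Gpd.assoc g (inv g) g (Gpd.inv_right g) (Gpd.inv_left g)).1

lemma D_g_d (g : G) : Gpd.D g (d g) :=
  D_of_d_eq_r (by rw [r_isId (isId_d g)])

lemma d_eq_of_D_id {p e : G} (he : IsId e) (h : Gpd.D p e) : d p = e := by
  have := d_eq_r_of_D h
  rwa [r_isId he] at this

lemma r_eq_of_id_D {e p : G} (he : IsId e) (h : Gpd.D e p) : r p = e := by
  have := d_eq_r_of_D h
  rw [d_isId he] at this
  exact this.symm

lemma d_mul {a b : G} (h : Gpd.D a b) : d (mul a b) = d b := by
  have h1 := (Gpd.assoc a b (d b) h (D_g_d b)).1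
  have h2 := d_eq_of_D_id (isId_d b) h1
  exact h2

lemma r_mul {a b : G} (h : Gpd.D a b) : r (mul a b) = r a := by
  have h1 := (Gpd.assoc (r a) a b (D_r_self a) h).2.1
  exact r_eq_of_id_D (isId_r a) h1

end GpdAux

open GpdAux in
open Classical in
/-- The induced partial action map: `g · x = r h` where `d h = x`, `Γ h = g`. -/
noncomputable def inducedAct {H : Type u} {G : Type v} [Gpd H] [Gpd G] (Γ : H → G)
    (g : G) (x : {e : H // IsId e}) : {e : H // IsId e} :=
  if hx : ∃ h : H, d h = x.1 ∧ Γ h = g then ⟨r hx.choose, isId_r _⟩ else x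

/-- a star injective functor `Γ : H → G` induces a partial action of
`G` on `H₀` (`g·x` defined iff some `h` has `d(h) = x`, `Γ(h) = g`, with `g·x = r(h)`),
which is global iff `Γ` is a covering. -/
theorem star_injective_induces_paction {H : Type u} {G : Type v} [Gpd H] [Gpd G]
    (Γ : H → G)
    (hD : ∀ a b : H, Gpd.D a b → Gpd.D (Γ a) (Γ b))
    (hm : ∀ a b : H, Gpd.D a b → Γ (Gpd.mul a b) = Gpd.mul (Γ a) (Γ b))
    (hinv : ∀ a : H, Γ (Gpd.inv a) = Gpd.inv (Γ a))
    (hsi : ∀ a b : H, Γ a = Γ b → d a = d b → a = b) :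
    ∃ P : PAction G {e : H // IsId e},
      (∀ (g : G) (x : {e : H // IsId e}),
          P.defined g x ↔ ∃ h : H, d h = x.1 ∧ Γ h = g) ∧
      (∀ (g : G) (x : {e : H // IsId e}) (h : H), d h = x.1 → Γ h = g →
          P.defined g x ∧ (P.act g x).1 = r h) ∧
      ((∀ (g : G) (x : {e : H // IsId e}), P.defined (d g) x → P.defined g x) ↔
        (∀ e : H, IsId e → ∀ g : G, Γ e = d g → ∃ h : H, d h = e ∧ Γ h = g)) := by
  classical
  open GpdAux in
  -- functor preserves d
  have hΓd : ∀ h : H, Γ (d h) = d (Γ h) := by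
    intro h
    show Γ (Gpd.mul (Gpd.inv h) h) = Gpd.mul (Gpd.inv (Γ h)) (Γ h)
    rw [hm _ _ (Gpd.inv_left h), hinv]
  -- uniqueness of witnesses
  have huniq : ∀ (g : G) (x : {e : H // IsId e}) (h : H), d h = x.1 → Γ h = g →
      ∀ (hx : ∃ h : H, d h = x.1 ∧ Γ h = g), hx.choose = h := by
    intro g x h hd hΓ hx
    exact hsi _ _ (hx.choose_spec.2.trans hΓ.symm) (hx.choose_spec.1.trans hd.symm)
  have hspec : ∀ (g : G) (x : {e : H // IsId e}) (h : H), d h = x.1 → Γ h = g →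
      (inducedAct Γ g x).1 = r h := by
    intro g x h hd hΓ
    have hx : ∃ h : H, d h = x.1 ∧ Γ h = g := ⟨h, hd, hΓ⟩
    simp only [inducedAct, dif_pos hx]
    rw [huniq g x h hd hΓ hx]
  refine ⟨{ defined := fun g x => ∃ h : H, d h = x.1 ∧ Γ h = g
            act := inducedAct Γ
            ex_id := ?_, id_act := ?_, inv_act := ?_, comp_act := ?_ },
          fun g x => Iff.rfl, fun g x h hd hΓ => ⟨⟨h, hd, hΓ⟩, hspec g x h hd hΓ⟩, ?_⟩
  · -- ex_id
    intro x
    refine ⟨Γ x.1, ⟨hD _ _ x.2.1, ?_⟩, ⟨x.1, d_isId x.2, rfl⟩⟩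
    rw [← hm _ _ x.2.1, x.2.2]
  · -- id_act
    rintro e x he ⟨h, hd, hΓ⟩
    have hid : d h = h := by
      refine hsi (d h) h ?_ ?_
      · rw [hΓd h, hΓ, d_isId he]
      · rw [d_isId (isId_d h)]
    have hr : r h = x.1 := by
      conv_lhs => rw [← hid]
      rw [r_isId (isId_d h)]; exact hd
    exact Subtype.ext ((hspec e x h hd hΓ).trans hr)
  · -- inv_act
    rintro g x ⟨h, hd, hΓ⟩
    have hact := hspec g x h hd hΓ
    have hd' : d (Gpd.inv h) = (inducedAct Γ g x).1 := by rw [d_inv, hact]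
    have hΓ' : Γ (Gpd.inv h) = Gpd.inv g := by rw [hinv, hΓ]
    refine ⟨⟨Gpd.inv h, hd', hΓ'⟩, ?_⟩
    refine Subtype.ext ?_
    rw [hspec (Gpd.inv g) _ (Gpd.inv h) hd' hΓ', r_inv, hd]
  · -- comp_act
    rintro g g' x hDgg' ⟨h', hd', hΓ'⟩ ⟨h, hd, hΓ⟩
    have hact' := hspec g' x h' hd' hΓ'
    have hDhh' : Gpd.D h h' := D_of_d_eq_r (by rw [hd, hact'])
    have hdm : d (Gpd.mul h h') = x.1 := by rw [d_mul hDhh', hd']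
    have hΓm : Γ (Gpd.mul h h') = Gpd.mul g g' := by rw [hm _ _ hDhh', hΓ, hΓ']
    refine ⟨⟨Gpd.mul h h', hdm, hΓm⟩, ?_⟩
    refine Subtype.ext ?_
    rw [hspec _ x _ hdm hΓm, r_mul hDhh', hspec g _ h hd hΓ]
  · -- global iff covering
    constructor
    · intro hglob e he g hΓe
      exact hglob g ⟨e, he⟩ ⟨e, d_isId he, hΓe⟩
    · rintro hcov g x ⟨h, hd, hΓ⟩
      have hΓx : Γ x.1 = d g := by
        rw [← hd, hΓd h, hΓ, d_isId (isId_d g)]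
      exact hcov x.1 x.2 g hΓx
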